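/- arXiv:2509.14670 — 5 statements merged into one kernel-verified Lean document; each statement's English description precedes it below -/
import Mathlib

section
/- Let F : ℝⁿ → ℝ, L₀ > 0, α > 1, β = (α+1)/2, and let (xᵏ)ₖ≥0 in ℝⁿ, (γₖ)ₖ≥1 nondecreasing with γ₁ = L₀, and (Lₖ)ₖ≥1 satisfy: γₖ = max{L₀, L₁, …, L_{k-1}}, and ((αγₖ - Lₖ)/2)‖xᵏ - x^{k-1}‖² + F(xᵏ) - F(x^{k-1}) ≤ 0 for all k ≥ 1. Define Rₖ = αγₖ(x^{k-1} - xᵏ) and S̄ = {k ≥ 1 : βγₖ < Lₖ}. Then for all k ≥ 1: ((α-1)/(4α²)) Σ_{l=1}^{k} (1/γₗ) ‖Rₗ‖² ≤ F(x⁰) - F(xᵏ) + Σ_{l ∈ [k]∩S̄} ((γ_{l+1} - γₗ)/2) ‖xˡ - x^{l-1}‖². -/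
theorem stmt3 {n : ℕ} (F : EuclideanSpace ℝ (Fin n) → ℝ)
    (x : ℕ → EuclideanSpace ℝ (Fin n)) (γ L : ℕ → ℝ) (L₀ α β : ℝ)
    (hL₀ : 0 < L₀) (hα : 1 < α) (hβ : β = (α + 1) / 2)
    (hγ1 : γ 1 = L₀) (hmono : ∀ l, 1 ≤ l → γ l ≤ γ (l + 1)) (hL0 : L 0 = L₀)
    (hγmax : ∀ k, 1 ≤ k → IsGreatest (L '' {i | i < k}) (γ k))
    (hdec : ∀ k, 1 ≤ k →
      (α * γ k - L k) / 2 * ‖x k - x (k - 1)‖ ^ 2 + F (x k) - F (x (k - 1)) ≤ 0)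
    (k : ℕ) (hk : 1 ≤ k) :
    (α - 1) / (4 * α ^ 2) *
        ∑ l ∈ Finset.Icc 1 k, (1 / γ l) * ‖(α * γ l) • (x (l - 1) - x l)‖ ^ 2 ≤
      F (x 0) - F (x k) +
        ∑ l ∈ (Finset.Icc 1 k).filter (fun l => β * γ l < L l),
          (γ (l + 1) - γ l) / 2 * ‖x l - x (l - 1)‖ ^ 2 := by
  have hα0 : (0:ℝ) < α := by linarith
  have hγpos : ∀ l, 1 ≤ l → 0 < γ l := by
    intro l hl
    have h0 : L 0 ≤ γ l :=
      (hγmax l hl).2 (Set.mem_image_of_mem L (show 0 ∈ {i | i < l} from hl))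
    rw [hL0] at h0
    linarith
  have hstep : ∀ l ∈ Finset.Icc 1 k,
      (α - 1) / (4 * α ^ 2) * ((1 / γ l) * ‖(α * γ l) • (x (l - 1) - x l)‖ ^ 2)
        ≤ (F (x (l - 1)) - F (x l)) +
          (if β * γ l < L l then (γ (l + 1) - γ l) / 2 * ‖x l - x (l - 1)‖ ^ 2 else 0) := by
    intro l hl
    obtain ⟨hl1, _⟩ := Finset.mem_Icc.mp hl
    have hc := hγpos l hl1
    have hnorm : ‖(α * γ l) • (x (l - 1) - x l)‖ ^ 2
        = (α * γ l) ^ 2 * ‖x l - x (l - 1)‖ ^ 2 := by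
      rw [norm_smul, norm_sub_rev, Real.norm_eq_abs, mul_pow, sq_abs]
    rw [hnorm]
    have heq : (α - 1) / (4 * α ^ 2) * ((1 / γ l) * ((α * γ l) ^ 2 * ‖x l - x (l - 1)‖ ^ 2))
        = (α - 1) * γ l / 4 * ‖x l - x (l - 1)‖ ^ 2 := by
      field_simp
    rw [heq]
    have hd := hdec l hl1
    have hd0 : (0:ℝ) ≤ ‖x l - x (l - 1)‖ ^ 2 := by positivity
    by_cases hs : β * γ l < L l
    · rw [if_pos hs]
      have hL1 : L l ≤ γ (l + 1) :=
        (hγmax (l + 1) (by omega)).2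
          (Set.mem_image_of_mem L (show l ∈ {i | i < l + 1} from Nat.lt_succ_self l))
      nlinarith [mul_nonneg (mul_nonneg (le_of_lt hc) (by linarith : (0:ℝ) ≤ α - 1)) hd0,
        mul_nonneg (by linarith : (0:ℝ) ≤ γ (l + 1) - L l) hd0]
    · rw [if_neg hs, add_zero]
      push_neg at hs
      nlinarith [mul_nonneg (mul_nonneg (le_of_lt hc) (by linarith : (0:ℝ) ≤ α - 1)) hd0,
        mul_nonneg (by nlinarith : (0:ℝ) ≤ β * γ l - L l) hd0]
  have htel : ∀ m : ℕ, ∑ l ∈ Finset.Icc 1 m, (F (x (l - 1)) - F (x l)) = F (x 0) - F (x m) := by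
    intro m
    induction m with
    | zero => simp
    | succ m ih =>
      rw [Finset.sum_Icc_succ_top (by omega), ih]
      simp
  have hsum := Finset.sum_le_sum hstep
  rw [Finset.sum_add_distrib, htel k] at hsum
  rw [Finset.mul_sum]
  rw [Finset.sum_filter]
  exact hsum
end

section
/- Under the hypotheses of the AC-PGM key inequality (Lemma 2.3), assume moreover Lₖ ≤ L for all k ≥ 1 and F(xᵏ) ≥ F* for all k, where L, F* ∈ ℝ. Then for all k ≥ 1: min_{1≤l≤k} ‖Rₗ‖ ≤ sqrt( 2α² max{L₀, L} (2Δ + C) / ((α-1) k) ), where Δ = F(x⁰) - F*, C = (max{L₀, L} - L₀) · max_{l ∈ S̄} ‖xˡ - x^{l-1}‖², and Rₗ = αγₗ(x^{l-1} - xˡ). -/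
theorem stmt4 {n : ℕ} (F : EuclideanSpace ℝ (Fin n) → ℝ)
    (x : ℕ → EuclideanSpace ℝ (Fin n)) (γ L : ℕ → ℝ) (L₀ α β Lc Fstar : ℝ)
    (hL₀ : 0 < L₀) (hα : 1 < α) (hβ : β = (α + 1) / 2)
    (hγ1 : γ 1 = L₀) (hmono : ∀ l, 1 ≤ l → γ l ≤ γ (l + 1)) (hL0 : L 0 = L₀)
    (hγmax : ∀ k, 1 ≤ k → IsGreatest (L '' {i | i < k}) (γ k))
    (hdec : ∀ k, 1 ≤ k →
      (α * γ k - L k) / 2 * ‖x k - x (k - 1)‖ ^ 2 + F (x k) - F (x (k - 1)) ≤ 0)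
    (hLb : ∀ k, 1 ≤ k → L k ≤ Lc) (hFstar : ∀ k, F (x k) ≥ Fstar)
    (k : ℕ) (hk : 1 ≤ k) :
    (Finset.Icc 1 k).inf' (Finset.nonempty_Icc.mpr hk)
        (fun l => ‖(α * γ l) • (x (l - 1) - x l)‖) ≤
      Real.sqrt (2 * α ^ 2 * max L₀ Lc *
          (2 * (F (x 0) - Fstar) +
            (max L₀ Lc - L₀) *
              sSup {d : ℝ | ∃ l, (1 ≤ l ∧ β * γ l < L l) ∧ d = ‖x l - x (l - 1)‖ ^ 2}) /
        ((α - 1) * k)) := by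
  set M : ℝ := max L₀ Lc with hMdef
  set S : Set ℝ := {d : ℝ | ∃ l, (1 ≤ l ∧ β * γ l < L l) ∧ d = ‖x l - x (l - 1)‖ ^ 2}
    with hSdef
  set D : ℝ := sSup S with hDdef
  have hβ1 : 1 < β := by rw [hβ]; linarith
  have hα0 : (0:ℝ) < α := by linarith
  have hL₀M : L₀ ≤ M := le_max_left _ _
  -- lower bound on γ
  have hγge : ∀ l, 1 ≤ l → L₀ ≤ γ l := by
    intro l hl
    exact (hγmax l hl).2 ⟨0, hl, hL0⟩
  have hγpos : ∀ l, 1 ≤ l → (0:ℝ) < γ l := fun l hl => lt_of_lt_of_le hL₀ (hγge l hl)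
  -- upper bound on γ
  have hγle : ∀ l, 1 ≤ l → γ l ≤ M := by
    intro l hl
    obtain ⟨i, _, hLi⟩ := (hγmax l hl).1
    rcases Nat.eq_zero_or_pos i with h0 | h0
    · rw [← hLi, h0, hL0]; exact hL₀M
    · rw [← hLi]; exact le_trans (hLb i h0) (le_max_right _ _)
  -- L l ≤ γ (l+1)
  have hLγ : ∀ l, L l ≤ γ (l + 1) := by
    intro l
    exact (hγmax (l+1) (Nat.le_add_left 1 l)).2 ⟨l, Nat.lt_succ_self l, rfl⟩
  -- full monotonicity on [1, ∞)
  have hmono' : ∀ a b, 1 ≤ a → a ≤ b → γ a ≤ γ b := by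
    intro a b ha hab
    induction b, hab using Nat.le_induction with
    | base => exact le_refl _
    | succ b hab ih => exact le_trans ih (hmono b (le_trans ha hab))
  -- the exceptional set is finite
  have hSbarfin : {l : ℕ | 1 ≤ l ∧ β * γ l < L l}.Finite := by
    by_contra hinf
    set p : ℕ → Prop := fun l => 1 ≤ l ∧ β * γ l < L l with hp
    have hmem : ∀ i, p (Nat.nth p i) := Nat.nth_mem_of_infinite hinf
    have hsm : StrictMono (Nat.nth p) := Nat.nth_strictMono hinf
    have hkey : ∀ i, L₀ * β ^ i ≤ γ (Nat.nth p i) := by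
      intro i
      induction i with
      | zero => simpa using hγge _ (hmem 0).1
      | succ i ih =>
        have h1 : Nat.nth p i + 1 ≤ Nat.nth p (i+1) := hsm (Nat.lt_succ_self i)
        have h2 : γ (Nat.nth p i + 1) ≤ γ (Nat.nth p (i+1)) :=
          hmono' _ _ (Nat.le_add_left 1 _) h1
        have h3 : β * γ (Nat.nth p i) < L (Nat.nth p i) := (hmem i).2
        have h4 := hLγ (Nat.nth p i)
        have h5 : β * (L₀ * β ^ i) ≤ β * γ (Nat.nth p i) :=
          mul_le_mul_of_nonneg_left ih (by linarith)
        calc L₀ * β ^ (i+1) = β * (L₀ * β ^ i) := by ring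
        _ ≤ γ (Nat.nth p (i+1)) := by linarith
    obtain ⟨i, hi⟩ := pow_unbounded_of_one_lt (M / L₀) hβ1
    have hlt : M < L₀ * β ^ i := by
      rw [div_lt_iff₀ hL₀] at hi; linarith [hi]
    have := hγle (Nat.nth p i) (hmem i).1
    linarith [hkey i]
  have hSfin : S.Finite := by
    have hEq : S = (fun l => ‖x l - x (l - 1)‖ ^ 2) '' {l : ℕ | 1 ≤ l ∧ β * γ l < L l} := by
      ext d
      simp only [hSdef, Set.mem_setOf_eq, Set.mem_image]
      constructor
      · rintro ⟨l, hl, rfl⟩; exact ⟨l, hl, rfl⟩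
      · rintro ⟨l, hl, rfl⟩; exact ⟨l, hl, rfl⟩
    rw [hEq]
    exact hSbarfin.image _
  have hSbdd : BddAbove S := hSfin.bddAbove
  have hD0 : 0 ≤ D := Real.sSup_nonneg (by rintro d ⟨l, _, rfl⟩; positivity)
  have hM0 : (0:ℝ) < M := lt_of_lt_of_le hL₀ hL₀M
  set c : ℝ := (α - 1) / (4 * α ^ 2 * M) with hcdef
  have hc0 : 0 < c := by
    apply div_pos (by linarith) (by positivity)
  -- per-step key inequality
  have hkey : ∀ l, 1 ≤ l →
      c * ‖(α * γ l) • (x (l - 1) - x l)‖ ^ 2 ≤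
        F (x (l - 1)) - F (x l) + (γ (l + 1) - γ l) / 2 * D := by
    intro l hl
    have hγl := hγpos l hl
    have hγlM := hγle l hl
    have hnorm : ‖(α * γ l) • (x (l - 1) - x l)‖ = (α * γ l) * ‖x l - x (l - 1)‖ := by
      rw [norm_smul, Real.norm_eq_abs, abs_of_pos (mul_pos hα0 hγl), norm_sub_rev]
    have hd := hdec l hl
    set d : ℝ := ‖x l - x (l - 1)‖ with hddef
    have hd0 : 0 ≤ d := norm_nonneg _
    rw [hnorm, mul_pow]
    have hdec' : (α * γ l - L l) / 2 * d ^ 2 ≤ F (x (l - 1)) - F (x l) := by linarith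
    have hmid : c * ((α * γ l) ^ 2 * d ^ 2) ≤ (α - 1) * γ l / 4 * d ^ 2 := by
      have hEq : c * ((α * γ l) ^ 2 * d ^ 2) = (α - 1) * (γ l ^ 2) / (4 * M) * d ^ 2 := by
        rw [hcdef]; field_simp
      rw [hEq]
      apply mul_le_mul_of_nonneg_right _ (sq_nonneg d)
      rw [div_le_div_iff₀ (by positivity) (by norm_num)]
      nlinarith [mul_nonneg (le_of_lt hγl) (sub_nonneg.mpr hγlM)]
    have hstepmono : 0 ≤ γ (l + 1) - γ l := by linarith [hmono l hl]
    rcases le_or_gt (L l) (β * γ l) with hcase | hcase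
    · have hEq2 : (α - 1) * γ l / 4 = (α * γ l - β * γ l) / 2 := by rw [hβ]; ring
      have h6 : (α * γ l - β * γ l) / 2 * d ^ 2 ≤ (α * γ l - L l) / 2 * d ^ 2 :=
        mul_le_mul_of_nonneg_right (by linarith) (sq_nonneg d)
      have h7 : 0 ≤ (γ (l + 1) - γ l) / 2 * D := mul_nonneg (by linarith) hD0
      rw [hEq2] at hmid
      linarith
    · have hdD : d ^ 2 ≤ D := le_csSup hSbdd ⟨l, ⟨hl, hcase⟩, rfl⟩
      have hβγ : γ l ≤ β * γ l := le_mul_of_one_le_left (le_of_lt hγl) (le_of_lt hβ1)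
      have h8 : L l - β * γ l ≤ γ (l + 1) - γ l := by linarith [hLγ l]
      have h9 : (L l - β * γ l) / 2 * d ^ 2 ≤ (γ (l + 1) - γ l) / 2 * D :=
        mul_le_mul (by linarith) hdD (sq_nonneg d) (by linarith)
      have hEq3 : (α - 1) * γ l / 4 * d ^ 2 =
          (α * γ l - L l) / 2 * d ^ 2 + (L l - β * γ l) / 2 * d ^ 2 := by
        rw [hβ]; ring
      linarith [hEq3 ▸ hmid]
  -- summed inequality
  have hsum : ∀ m, 1 ≤ m →
      ∑ l ∈ Finset.Icc 1 m, c * ‖(α * γ l) • (x (l - 1) - x l)‖ ^ 2 ≤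
        F (x 0) - F (x m) + (γ (m + 1) - γ 1) / 2 * D := by
    intro m hm
    induction m, hm using Nat.le_induction with
    | base =>
      simp only [Finset.Icc_self, Finset.sum_singleton]
      have h1 := hkey 1 le_rfl
      norm_num at h1 ⊢
      linarith
    | succ m hm ih =>
      rw [Finset.sum_Icc_succ_top (by omega)]
      have h1 := hkey (m + 1) (by omega)
      simp only [Nat.add_sub_cancel] at h1 ⊢
      linarith
  -- min over iterates
  set m0 : ℝ := (Finset.Icc 1 k).inf' (Finset.nonempty_Icc.mpr hk)
      (fun l => ‖(α * γ l) • (x (l - 1) - x l)‖) with hm0def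
  have hm0nn : 0 ≤ m0 := Finset.le_inf' _ _ (fun b _ => norm_nonneg _)
  have hcard : (Finset.Icc 1 k).card = k := by rw [Nat.card_Icc]; omega
  have hsum2 : (k : ℝ) * (c * m0 ^ 2) ≤
      ∑ l ∈ Finset.Icc 1 k, c * ‖(α * γ l) • (x (l - 1) - x l)‖ ^ 2 := by
    calc (k : ℝ) * (c * m0 ^ 2) = ∑ _l ∈ Finset.Icc 1 k, c * m0 ^ 2 := by
          rw [Finset.sum_const, hcard, nsmul_eq_mul]
    _ ≤ _ := by
        apply Finset.sum_le_sum
        intro l hl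
        have h1 : m0 ≤ ‖(α * γ l) • (x (l - 1) - x l)‖ :=
          Finset.inf'_le (fun l => ‖(α * γ l) • (x (l - 1) - x l)‖) hl
        have h2 : m0 ^ 2 ≤ ‖(α * γ l) • (x (l - 1) - x l)‖ ^ 2 :=
          pow_le_pow_left₀ hm0nn h1 2
        exact mul_le_mul_of_nonneg_left h2 (le_of_lt hc0)
  have htot : (k : ℝ) * (c * m0 ^ 2) ≤
      (F (x 0) - Fstar) + (M - L₀) / 2 * D := by
    have h1 := hsum k hk
    have h2 : (γ (k + 1) - γ 1) / 2 * D ≤ (M - L₀) / 2 * D := by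
      apply mul_le_mul_of_nonneg_right _ hD0
      have := hγle (k + 1) (by omega)
      rw [hγ1]
      linarith
    have h3 := hFstar k
    linarith
  have hk0 : (0 : ℝ) < (k : ℝ) := by exact_mod_cast hk
  have hm2 : m0 ^ 2 ≤
      2 * α ^ 2 * M * (2 * (F (x 0) - Fstar) + (M - L₀) * D) / ((α - 1) * k) := by
    rw [le_div_iff₀ (mul_pos (by linarith : (0:ℝ) < α - 1) hk0)]
    have h4 : (0 : ℝ) < 4 * α ^ 2 * M := by positivity
    have h5 := mul_le_mul_of_nonneg_left htot (le_of_lt h4)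
    have hLHS : (4 * α ^ 2 * M) * ((k : ℝ) * (c * m0 ^ 2)) = m0 ^ 2 * ((α - 1) * k) := by
      rw [hcdef]; field_simp
    have hRHS : (4 * α ^ 2 * M) * ((F (x 0) - Fstar) + (M - L₀) / 2 * D) =
        2 * α ^ 2 * M * (2 * (F (x 0) - Fstar) + (M - L₀) * D) := by ring
    linarith [hLHS ▸ hRHS ▸ h5]
  have hy : (0 : ℝ) ≤
      2 * α ^ 2 * M * (2 * (F (x 0) - Fstar) + (M - L₀) * D) / ((α - 1) * k) :=
    le_trans (sq_nonneg m0) hm2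
  exact (Real.le_sqrt hm0nn hy).mpr hm2
end

section
/- Let α > 1/2, β = α + 1/2, γ > 0, L ∈ ℝ with L ≤ βγ, G ≥ 0, d > 0 with d ≤ D and γ ≤ M (for constants D, M > 0), and τ = min{1, G/(αγd²)}. If (1 - L/(2αγ)) τ G + F(x⁺) - F(x) ≤ 0, then F(x) - F(x⁺) ≥ ((2α-1)/(4α)) min{ G, G²/(α M D²) }. -/
theorem stmt12 (α β γ L G d D M Fx Fxp τ : ℝ) (hα : 1 / 2 < α) (hβ : β = α + 1 / 2)
    (hγ : 0 < γ) (hL : L ≤ β * γ) (hG : 0 ≤ G) (hd : 0 < d) (hdD : d ≤ D)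
    (hγM : γ ≤ M) (hD : 0 < D) (hM : 0 < M)
    (hτ : τ = min 1 (G / (α * γ * d ^ 2)))
    (h : (1 - L / (2 * α * γ)) * τ * G + Fxp - Fx ≤ 0) :
    Fx - Fxp ≥ (2 * α - 1) / (4 * α) * min G (G ^ 2 / (α * M * D ^ 2)) := by
  subst hβ
  have hα0 : (0:ℝ) < α := by linarith
  have hden : (0:ℝ) < α * γ * d ^ 2 := by positivity
  have hc0 : (0:ℝ) ≤ (2 * α - 1) / (4 * α) := div_nonneg (by linarith) (by linarith)
  -- A ≥ c
  have hA : (2 * α - 1) / (4 * α) ≤ 1 - L / (2 * α * γ) := by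
    have h1 : L / (2 * α * γ) ≤ (α + 1 / 2) / (2 * α) := by
      rw [div_le_div_iff₀ (by positivity) (by positivity)]
      nlinarith [mul_le_mul_of_nonneg_left hL hα0.le]
    have h2 : (2 * α - 1) / (4 * α) = 1 - (α + 1 / 2) / (2 * α) := by
      field_simp; ring
    linarith
  -- τ G = min G (G^2/(αγd²))
  have hτG : τ * G = min G (G ^ 2 / (α * γ * d ^ 2)) := by
    rw [hτ, min_mul_of_nonneg _ _ hG, one_mul, div_mul_eq_mul_div, ← sq]
  have hτG0 : 0 ≤ τ * G := by
    rw [hτG]; exact le_min hG (by positivity)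
  -- min ≥ target min
  have hmin : min G (G ^ 2 / (α * M * D ^ 2)) ≤ τ * G := by
    rw [hτG]
    refine min_le_min le_rfl ?_
    apply div_le_div_of_nonneg_left (by positivity) hden
    have h2 : d ^ 2 ≤ D ^ 2 := by nlinarith
    nlinarith [mul_le_mul_of_nonneg_left (mul_le_mul hγM h2 (by positivity) hM.le) hα0.le]
  have key : (2 * α - 1) / (4 * α) * min G (G ^ 2 / (α * M * D ^ 2)) ≤
      (1 - L / (2 * α * γ)) * (τ * G) := by
    calc (2 * α - 1) / (4 * α) * min G (G ^ 2 / (α * M * D ^ 2))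
        ≤ (2 * α - 1) / (4 * α) * (τ * G) := by
          exact mul_le_mul_of_nonneg_left hmin hc0
      _ ≤ (1 - L / (2 * α * γ)) * (τ * G) := mul_le_mul_of_nonneg_right hA hτG0
  nlinarith [key]
end

section
/- Let f* ∈ ℝ, α > 1/2, L₀ > 0, M ≥ L₀, and suppose sequences (f(xᵏ))ₖ, nondecreasing (γₖ) with γ₁ = L₀ and γ_{k+1} ≤ M, and (gₖ)ₖ ≥ 0 satisfy for all l: ((2α-1)/(4α²M)) gₗ ≤ f(x^{l-1}) - f(xˡ) + 𝟙[l ∈ S̄] · ((γ_{l+1} - γₗ)/(2α²L₀²)) gₗ, with f(xᵏ) ≥ f* and gₗ ≤ G² for l ∈ S̄. Then min_{1≤l≤k} √gₗ ≤ sqrt( 2M(2α²L₀²Δ + C)/((2α-1)L₀²k) ), where Δ = f(x⁰) - f* and C = (M - L₀)G². -/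
lemma tele_aux (F : ℕ → ℝ) (k : ℕ) :
    ∑ l ∈ Finset.Icc 1 k, (F (l - 1) - F l) = F 0 - F k := by
  induction k with
  | zero => simp
  | succ n ih =>
      rw [Finset.sum_Icc_succ_top (Nat.succ_le_succ (Nat.zero_le n)), ih]
      simp

lemma tele_aux2 (F : ℕ → ℝ) (k : ℕ) :
    ∑ l ∈ Finset.Icc 1 k, (F (l + 1) - F l) = F (k + 1) - F 1 := by
  induction k with
  | zero => simp
  | succ n ih =>
      rw [Finset.sum_Icc_succ_top (Nat.succ_le_succ (Nat.zero_le n)), ih]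
      ring

theorem stmt15 (fstar α L₀ M Gb : ℝ) (hα : 1 / 2 < α) (hL₀ : 0 < L₀) (hM : L₀ ≤ M)
    (φ g γ : ℕ → ℝ) (hg : ∀ l, 0 ≤ g l)
    (hmono : ∀ l, γ l ≤ γ (l + 1)) (hγ1 : γ 1 = L₀)
    (k : ℕ) (hk : 1 ≤ k) (hγM : γ (k + 1) ≤ M)
    (Sbar : Finset ℕ) (hGb : ∀ l ∈ Sbar, g l ≤ Gb ^ 2)
    (hφ : ∀ j, φ j ≥ fstar)
    (hstep : ∀ l ∈ Finset.Icc 1 k,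
      (2 * α - 1) / (4 * α ^ 2 * M) * g l ≤
        φ (l - 1) - φ l +
          (if l ∈ Sbar then (γ (l + 1) - γ l) / (2 * α ^ 2 * L₀ ^ 2) * g l else 0)) :
    (Finset.Icc 1 k).inf' (Finset.nonempty_Icc.mpr hk) (fun l => Real.sqrt (g l)) ≤
      Real.sqrt (2 * M * (2 * α ^ 2 * L₀ ^ 2 * (φ 0 - fstar) + (M - L₀) * Gb ^ 2) /
        ((2 * α - 1) * L₀ ^ 2 * k)) := by
  have hα0 : (0:ℝ) < α := lt_trans (by norm_num) hα
  have h2α : (0:ℝ) < 2 * α - 1 := by linarith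
  have hM0 : (0:ℝ) < M := lt_of_lt_of_le hL₀ hM
  have hk0 : (0:ℝ) < (k : ℝ) := by exact_mod_cast hk
  set c : ℝ := (2 * α - 1) / (4 * α ^ 2 * M) with hc
  have hc0 : 0 < c := div_pos h2α (by positivity)
  set D : ℝ := 2 * α ^ 2 * L₀ ^ 2 with hD
  have hD0 : (0:ℝ) < D := by positivity
  have hγnn : ∀ l, 0 ≤ γ (l + 1) - γ l := fun l => sub_nonneg.mpr (hmono l)
  have hGb2 : (0:ℝ) ≤ Gb ^ 2 := sq_nonneg _
  set S := Finset.Icc 1 k with hS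
  have hne : S.Nonempty := Finset.nonempty_Icc.mpr hk
  set m : ℝ := S.inf' hne g with hm
  -- telescoping for φ
  have tele1 : ∑ l ∈ S, (φ (l - 1) - φ l) = φ 0 - φ k := tele_aux φ k
  -- telescoping for γ
  have tele2 : ∑ l ∈ S, (γ (l + 1) - γ l) = γ (k + 1) - γ 1 := tele_aux2 γ k
  -- bound indicator term
  have ht : ∀ l, (if l ∈ Sbar then (γ (l + 1) - γ l) / D * g l else 0) ≤
      (γ (l + 1) - γ l) * Gb ^ 2 / D := by
    intro l
    split_ifs with h
    · have h1 : 0 ≤ (γ (l + 1) - γ l) / D := div_nonneg (hγnn l) hD0.le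
      calc (γ (l + 1) - γ l) / D * g l ≤ (γ (l + 1) - γ l) / D * Gb ^ 2 :=
            mul_le_mul_of_nonneg_left (hGb l h) h1
        _ = (γ (l + 1) - γ l) * Gb ^ 2 / D := by ring
    · exact div_nonneg (mul_nonneg (hγnn l) hGb2) hD0.le
  -- main summed inequality
  have key : (k : ℝ) * (c * m) ≤ (φ 0 - fstar) + (M - L₀) * Gb ^ 2 / D := by
    have h1 : (k : ℝ) * (c * m) = ∑ _l ∈ S, c * m := by
      rw [Finset.sum_const, hS, Nat.card_Icc]
      simp
    have h2 : ∑ _l ∈ S, c * m ≤ ∑ l ∈ S, c * g l :=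
      Finset.sum_le_sum fun l hl =>
        mul_le_mul_of_nonneg_left (Finset.inf'_le g hl) hc0.le
    have h3 : ∑ l ∈ S, c * g l ≤
        ∑ l ∈ S, (φ (l - 1) - φ l +
          (if l ∈ Sbar then (γ (l + 1) - γ l) / D * g l else 0)) :=
      Finset.sum_le_sum fun l hl => hstep l hl
    have h4 : ∑ l ∈ S, (φ (l - 1) - φ l +
          (if l ∈ Sbar then (γ (l + 1) - γ l) / D * g l else 0)) =
        (φ 0 - φ k) + ∑ l ∈ S, (if l ∈ Sbar then (γ (l + 1) - γ l) / D * g l else 0) := by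
      rw [Finset.sum_add_distrib, tele1]
    have h5 : ∑ l ∈ S, (if l ∈ Sbar then (γ (l + 1) - γ l) / D * g l else 0) ≤
        (γ (k + 1) - γ 1) * Gb ^ 2 / D := by
      calc ∑ l ∈ S, (if l ∈ Sbar then (γ (l + 1) - γ l) / D * g l else 0)
          ≤ ∑ l ∈ S, (γ (l + 1) - γ l) * Gb ^ 2 / D := Finset.sum_le_sum fun l _ => ht l
        _ = (∑ l ∈ S, (γ (l + 1) - γ l)) * Gb ^ 2 / D := by
            rw [← Finset.sum_div, ← Finset.sum_mul]
        _ = (γ (k + 1) - γ 1) * Gb ^ 2 / D := by rw [tele2]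
    have h6 : (γ (k + 1) - γ 1) * Gb ^ 2 / D ≤ (M - L₀) * Gb ^ 2 / D := by
      have : γ (k + 1) - γ 1 ≤ M - L₀ := by rw [hγ1]; linarith
      gcongr
    have h7 : φ 0 - φ k ≤ φ 0 - fstar := by linarith [hφ k]
    linarith
  -- deduce bound on m
  set B : ℝ := 2 * M * (2 * α ^ 2 * L₀ ^ 2 * (φ 0 - fstar) + (M - L₀) * Gb ^ 2) /
      ((2 * α - 1) * L₀ ^ 2 * k) with hB
  have hmB : m ≤ B := by
    have hkc : (0:ℝ) < (k : ℝ) * c := mul_pos hk0 hc0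
    have h1 : m ≤ ((φ 0 - fstar) + (M - L₀) * Gb ^ 2 / D) / ((k : ℝ) * c) := by
      rw [le_div_iff₀ hkc]
      linarith [key]
    have h2 : ((φ 0 - fstar) + (M - L₀) * Gb ^ 2 / D) / ((k : ℝ) * c) = B := by
      rw [hB, hc, hD]
      field_simp
      ring
    linarith [h1, h2.le]
  obtain ⟨l₀, hl₀, hl₀m⟩ := Finset.exists_mem_eq_inf' hne g
  calc S.inf' hne (fun l => Real.sqrt (g l)) ≤ Real.sqrt (g l₀) :=
        Finset.inf'_le _ hl₀
    _ = Real.sqrt m := by rw [hm, hl₀m]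
    _ ≤ Real.sqrt B := Real.sqrt_le_sqrt hmB
end

section
/- Let g : ℝⁿ → ℝ ∪ {+∞} be proper lower semicontinuous, f : ℝⁿ → ℝ continuously differentiable, and (xᵏ) a sequence with xᵏ ∈ argmin_y { ⟨∇f(x^{k-1}), y⟩ + (αγₖ/2)‖y - x^{k-1}‖² + g(y) } for a bounded sequence (γₖ) with γₖ ≥ L₀ > 0 and α > 0. If ‖xᵏ - x^{k-1}‖ → 0, a subsequence x^{k} → x* (k ∈ K), and F(xᵏ) = f(xᵏ) + g(xᵏ) converges, then 0 ∈ ∂F(x*) (limiting subdifferential), i.e., x* is an l-stationary point. -/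
open Filter Topology
open scoped RealInnerProductSpace

/-- Fréchet subdifferential of an extended-real-valued function on ℝⁿ. -/
def frechetSubdiff {n : ℕ} (F : EuclideanSpace ℝ (Fin n) → EReal)
    (x : EuclideanSpace ℝ (Fin n)) : Set (EuclideanSpace ℝ (Fin n)) :=
  {ξ | F x ≠ ⊤ ∧ F x ≠ ⊥ ∧ ∀ ε : ℝ, 0 < ε → ∀ᶠ y in 𝓝 x,
    F x + ((⟪ξ, y - x⟫ - ε * ‖y - x‖ : ℝ) : EReal) ≤ F y}

/-- Limiting (Mordukhovich) subdifferential. -/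
def limitingSubdiff {n : ℕ} (F : EuclideanSpace ℝ (Fin n) → EReal)
    (x : EuclideanSpace ℝ (Fin n)) : Set (EuclideanSpace ℝ (Fin n)) :=
  {ξ | ∃ xs : ℕ → EuclideanSpace ℝ (Fin n), ∃ ξs : ℕ → EuclideanSpace ℝ (Fin n),
    Tendsto xs atTop (𝓝 x) ∧ Tendsto (fun m => F (xs m)) atTop (𝓝 (F x)) ∧
    Tendsto ξs atTop (𝓝 ξ) ∧ ∀ m, ξs m ∈ frechetSubdiff F (xs m)}

/-!
Optimality of `xᵏ` for the proximal model, via the Fermat rule and the sum rule with the smooth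
part, puts `ξᵏ = ∇f(xᵏ) - ∇f(xᵏ⁻¹) - αγₖ (xᵏ - xᵏ⁻¹)` in the Fréchet subdifferential of
`F = f + g` at `xᵏ`. Along the subsequence `ξᵏ → 0`, since the steps vanish, `∇f` is continuous
and `αγₖ` is bounded. Finally `F(xᵏ) → F(x*)`: lower semicontinuity bounds `g(xᵏ)` from below,
and comparing the model at `xᵏ` with its value at `x*` gives `g(xᵏ) ≤ g(x*) + o(1)`.
-/

namespace EReal

theorem tendsto_coe_add {ι : Type*} {l : Filter ι} {a : ι → ℝ} {u : ι → EReal} {a₀ : ℝ}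
    {u₀ : EReal} (ha : Tendsto a l (𝓝 a₀)) (hu : Tendsto u l (𝓝 u₀)) :
    Tendsto (fun i => (a i : EReal) + u i) l (𝓝 (a₀ + u₀)) :=
  (continuousAt_add (Or.inl (coe_ne_top a₀)) (Or.inl (coe_ne_bot a₀))).tendsto.comp
    ((tendsto_coe.2 ha).prodMk_nhds hu)

theorem le_add_coe_sub_of_coe_add_le {a b : ℝ} {u v : EReal} (h : (a : EReal) + u ≤ b + v) :
    u ≤ v + ((b - a : ℝ) : EReal) :=
  calc u = ((-a : ℝ) : EReal) + (a + u) := by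
        rw [← add_assoc, ← coe_add, neg_add_cancel, coe_zero, zero_add]
    _ ≤ ((-a : ℝ) : EReal) + (b + v) := by gcongr
    _ = v + ((b - a : ℝ) : EReal) := by rw [← add_assoc, ← coe_add, add_comm, neg_add_eq_sub]

end EReal

theorem LowerSemicontinuous.tendsto_of_le_add {X ι : Type*} [TopologicalSpace X]
    {g : X → EReal} (hg : LowerSemicontinuous g) {l : Filter ι} {u : ι → X} {a : X}
    {δ : ι → ℝ} (hu : Tendsto u l (𝓝 a)) (hδ : Tendsto δ l (𝓝 0))
    (hle : ∀ᶠ i in l, g (u i) ≤ g a + δ i) :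
    Tendsto (fun i => g (u i)) l (𝓝 (g a)) := by
  have hupper : Tendsto (fun i => g a + δ i) l (𝓝 (g a)) := by
    simpa [add_comm] using EReal.tendsto_coe_add hδ (tendsto_const_nhds (x := g a))
  refine tendsto_order.2 ⟨fun b hb => hu.eventually (hg a b hb), fun b hb => ?_⟩
  filter_upwards [hle, hupper.eventually (gt_mem_nhds hb)] with i hi hib
  exact hi.trans_lt hib

section FrechetSubdiff

variable {n : ℕ} {x ξ q : EuclideanSpace ℝ (Fin n)}

theorem IsLocalMin.zero_mem_frechetSubdiff {F : EuclideanSpace ℝ (Fin n) → EReal}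
    (hmin : IsLocalMin F x) (htop : F x ≠ ⊤) (hbot : F x ≠ ⊥) : 0 ∈ frechetSubdiff F x := by
  refine ⟨htop, hbot, fun ε hε => hmin.mono fun y hy => le_trans ?_ hy⟩
  refine add_le_of_nonpos_right (EReal.coe_nonpos.2 ?_)
  rw [inner_zero_left, zero_sub, neg_nonpos]
  positivity

theorem HasGradientAt.add_mem_frechetSubdiff {h : EuclideanSpace ℝ (Fin n) → ℝ}
    {G : EuclideanSpace ℝ (Fin n) → EReal} (hh : HasGradientAt h q x)
    (hξ : ξ ∈ frechetSubdiff G x) :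
    q + ξ ∈ frechetSubdiff (fun y => (h y : EReal) + G y) x := by
  obtain ⟨htop, hbot, hlocal⟩ := hξ
  obtain ⟨a, hGx⟩ : ∃ a : ℝ, G x = a := ⟨_, (EReal.coe_toReal htop hbot).symm⟩
  have hsum : (h x : EReal) + G x = ((h x + a : ℝ) : EReal) := by rw [hGx, EReal.coe_add]
  refine ⟨?_, ?_, fun ε hε => ?_⟩
  · simp only [hsum]; exact EReal.coe_ne_top _
  · simp only [hsum]; exact EReal.coe_ne_bot _
  have hlin := (hasGradientAt_iff_isLittleO.1 hh).def (half_pos hε)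
  filter_upwards [hlin, hlocal (ε / 2) (half_pos hε)] with y hy hG
  rw [Real.norm_eq_abs, abs_le] at hy
  rw [hGx] at hG
  calc (h x : EReal) + G x + ((⟪q + ξ, y - x⟫ - ε * ‖y - x‖ : ℝ) : EReal)
      = ((h x + ⟪q, y - x⟫ - ε / 2 * ‖y - x‖ : ℝ) : EReal) +
          (a + ((⟪ξ, y - x⟫ - ε / 2 * ‖y - x‖ : ℝ) : EReal)) := by
        rw [hsum]
        norm_cast
        rw [inner_add_left]
        ring_nf
    _ ≤ h y + G y := add_le_add (EReal.coe_le_coe_iff.2 (by linarith)) hG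

end FrechetSubdiff

section ProxGradModel

variable {E : Type*} [NormedAddCommGroup E] [InnerProductSpace ℝ E]

noncomputable def proxGradModel (p u : E) (c : ℝ) (y : E) : ℝ :=
  ⟪p, y⟫ + c / 2 * ‖y - u‖ ^ 2

theorem hasGradientAt_proxGradModel [CompleteSpace E] (p u : E) (c : ℝ) (y : E) :
    HasGradientAt (proxGradModel p u c) (p + c • (y - u)) y := by
  have hlin : HasFDerivAt (fun z : E => ⟪p, z⟫) (innerSL ℝ p) y := (innerSL ℝ p).hasFDerivAt
  have hsq := (((hasFDerivAt_id y).sub_const u).norm_sq).const_mul (c / 2)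
  refine (hlin.add hsq).congr_fderiv ?_
  ext v
  simp only [id_eq, map_sub, ContinuousLinearMap.comp_id, add_apply, coe_innerSL_apply,
    smul_apply, sub_apply, nsmul_eq_mul, Nat.cast_ofNat, smul_eq_mul, map_add, map_smul,
    InnerProductSpace.toDual_apply_apply, add_right_inj]
  ring

theorem tendsto_proxGradModel_sub {ι : Type*} {l : Filter ι} {p u v : ι → E} {c : ι → ℝ}
    {p₀ a : E} (hp : Tendsto p l (𝓝 p₀)) (hc : IsBoundedUnder (· ≤ ·) l (norm ∘ c))
    (hu : Tendsto u l (𝓝 a)) (hv : Tendsto v l (𝓝 a)) :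
    Tendsto (fun i => proxGradModel (p i) (v i) (c i) a - proxGradModel (p i) (v i) (c i) (u i))
      l (𝓝 0) := by
  have hlin : Tendsto (fun i => ⟪p i, a - u i⟫) l (𝓝 0) := by
    simpa using hp.inner ((tendsto_const_nhds (x := a)).sub hu)
  have hsq : Tendsto (fun i => (‖a - v i‖ ^ 2 - ‖u i - v i‖ ^ 2) / 2) l (𝓝 0) := by
    have hav : Tendsto (fun i => ‖a - v i‖) l (𝓝 0) := by
      simpa using ((tendsto_const_nhds (x := a)).sub hv).norm
    have huv : Tendsto (fun i => ‖u i - v i‖) l (𝓝 0) := by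
      simpa using (hu.sub hv).norm
    simpa using ((hav.pow 2).sub (huv.pow 2)).div_const 2
  convert hlin.add (hc.smul_tendsto_zero hsq) using 2 with i
  · simp only [proxGradModel, inner_sub_right, smul_eq_mul]
    ring
  · simp

end ProxGradModel

theorem sub_mem_frechetSubdiff_of_proxGrad_step {n : ℕ}
    {f : EuclideanSpace ℝ (Fin n) → ℝ} {g : EuclideanSpace ℝ (Fin n) → EReal}
    {p q u x : EuclideanSpace ℝ (Fin n)} {c : ℝ} (hf : HasGradientAt f q x)
    (hmin : ∀ y, (proxGradModel p u c x : EReal) + g x ≤ proxGradModel p u c y + g y)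
    (htop : g x ≠ ⊤) (hbot : g x ≠ ⊥) :
    q - p - c • (x - u) ∈ frechetSubdiff (fun y => (f y : EReal) + g y) x := by
  have hzero : (0 : EuclideanSpace ℝ (Fin n)) ∈
      frechetSubdiff (fun y => (proxGradModel p u c y : EReal) + g y) x := by
    refine IsLocalMin.zero_mem_frechetSubdiff (Eventually.of_forall hmin) ?_ ?_
    · exact EReal.add_lt_top (EReal.coe_ne_top _) htop |>.ne
    · exact EReal.add_ne_bot_iff.2 ⟨EReal.coe_ne_bot _, hbot⟩
  have hdiff : HasGradientAt (fun y => f y - proxGradModel p u c y) (q - (p + c • (x - u))) x := by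
    rw [hasGradientAt_iff_hasFDerivAt, map_sub]
    exact hf.sub (hasGradientAt_proxGradModel p u c x)
  have hsum := hdiff.add_mem_frechetSubdiff hzero
  convert hsum using 2
  · ext y
    rw [← add_assoc, ← EReal.coe_add, sub_add_cancel]
  · rw [add_zero, sub_add_eq_sub_sub]

theorem stmt17_general {n : ℕ} (f : EuclideanSpace ℝ (Fin n) → ℝ)
    (g : EuclideanSpace ℝ (Fin n) → EReal)
    (hf : ContDiff ℝ 1 f)
    (hg_lsc : LowerSemicontinuous g)
    (hg_ne_bot : ∀ z, g z ≠ ⊥) (hg_proper : ∃ z, g z ≠ ⊤)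
    (α L₀ : ℝ)
    (γ : ℕ → ℝ) (hγlb : ∀ k, L₀ ≤ γ k) (hγbd : ∃ B : ℝ, ∀ k, γ k ≤ B)
    (x : ℕ → EuclideanSpace ℝ (Fin n))
    (hargmin : ∀ k, 1 ≤ k → ∀ y,
      ((⟪gradient f (x (k - 1)), x k⟫ +
          α * γ k / 2 * ‖x k - x (k - 1)‖ ^ 2 : ℝ) : EReal) + g (x k) ≤
        ((⟪gradient f (x (k - 1)), y⟫ +
          α * γ k / 2 * ‖y - x (k - 1)‖ ^ 2 : ℝ) : EReal) + g y)
    (hstep : Tendsto (fun k => ‖x k - x (k - 1)‖) atTop (𝓝 0))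
    (xstar : EuclideanSpace ℝ (Fin n)) (φ : ℕ → ℕ) (hφ : StrictMono φ)
    (hsub : Tendsto (fun m => x (φ m)) atTop (𝓝 xstar)) :
    (0 : EuclideanSpace ℝ (Fin n)) ∈
      limitingSubdiff (fun y => ((f y : EReal) + g y)) xstar := by
  obtain ⟨B, hB⟩ := hγbd
  obtain ⟨z₀, hz₀⟩ := hg_proper
  have hgrad : Continuous (gradient f) :=
    (InnerProductSpace.toDual ℝ _).symm.continuous.comp (hf.continuous_fderiv one_ne_zero)
  have hgap : ∀ k, 1 ≤ k → ∀ y, g (x k) ≤ g y +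
      ((proxGradModel (gradient f (x (k - 1))) (x (k - 1)) (α * γ k) y -
        proxGradModel (gradient f (x (k - 1))) (x (k - 1)) (α * γ k) (x k) : ℝ) : EReal) :=
    fun k hk y => EReal.le_add_coe_sub_of_coe_add_le (hargmin k hk y)
  have hfin : ∀ k, 1 ≤ k → g (x k) ≠ ⊤ := fun k hk =>
    ((hgap k hk z₀).trans_lt (EReal.add_lt_top hz₀ (EReal.coe_ne_top _))).ne
  have hc : ∀ k, ‖α * γ k‖ ≤ |α| * max |L₀| |B| := fun k => by
    rw [Real.norm_eq_abs, abs_mul]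
    exact mul_le_mul_of_nonneg_left (abs_le_max_abs_abs (hγlb k) (hB k)) (abs_nonneg α)
  -- the shift keeps every index `≥ 1`, where `hargmin` applies
  set ks : ℕ → ℕ := fun m => φ (m + 1)
  have hks : Tendsto ks atTop atTop := hφ.tendsto_atTop.comp (tendsto_add_atTop_nat 1)
  have hks_pos : ∀ m, 1 ≤ ks m := fun m => (Nat.le_add_left 1 m).trans hφ.le_apply
  have hcbdd : IsBoundedUnder (· ≤ ·) atTop (norm ∘ fun m => α * γ (ks m)) :=
    isBoundedUnder_of ⟨_, fun m => hc (ks m)⟩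
  have hxs : Tendsto (fun m => x (ks m)) atTop (𝓝 xstar) := hsub.comp (tendsto_add_atTop_nat 1)
  have hstep_sub : Tendsto (fun m => x (ks m) - x (ks m - 1)) atTop (𝓝 0) :=
    tendsto_zero_iff_norm_tendsto_zero.2 (hstep.comp hks)
  have hprev : Tendsto (fun m => x (ks m - 1)) atTop (𝓝 xstar) := by
    simpa using hxs.sub hstep_sub
  have hg_lim : Tendsto (fun m => g (x (ks m))) atTop (𝓝 (g xstar)) :=
    hg_lsc.tendsto_of_le_add hxs
      (tendsto_proxGradModel_sub ((hgrad.tendsto _).comp hprev) hcbdd hxs hprev)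
      (Eventually.of_forall fun m => hgap _ (hks_pos m) xstar)
  refine ⟨fun m => x (ks m), fun m => gradient f (x (ks m)) - gradient f (x (ks m - 1)) -
      (α * γ (ks m)) • (x (ks m) - x (ks m - 1)), hxs,
    EReal.tendsto_coe_add ((hf.continuous.tendsto _).comp hxs) hg_lim, ?_, fun m => ?_⟩
  · simpa using (((hgrad.tendsto _).comp hxs).sub ((hgrad.tendsto _).comp hprev)).sub
      (hcbdd.smul_tendsto_zero hstep_sub)
  · exact sub_mem_frechetSubdiff_of_proxGrad_step
      ((hf.differentiable one_ne_zero _).hasGradientAt) (hargmin _ (hks_pos m))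
      (hfin _ (hks_pos m)) (hg_ne_bot _)

theorem stmt17 {n : ℕ} (f : EuclideanSpace ℝ (Fin n) → ℝ)
    (g : EuclideanSpace ℝ (Fin n) → EReal)
    (hf : ContDiff ℝ 1 f)
    (hg_lsc : LowerSemicontinuous g)
    (hg_ne_bot : ∀ z, g z ≠ ⊥) (hg_proper : ∃ z, g z ≠ ⊤)
    (α L₀ : ℝ) (hα : 0 < α) (hL₀ : 0 < L₀)
    (γ : ℕ → ℝ) (hγlb : ∀ k, L₀ ≤ γ k) (hγbd : ∃ B : ℝ, ∀ k, γ k ≤ B)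
    (x : ℕ → EuclideanSpace ℝ (Fin n))
    (hargmin : ∀ k, 1 ≤ k → ∀ y,
      ((⟪gradient f (x (k - 1)), x k⟫ +
          α * γ k / 2 * ‖x k - x (k - 1)‖ ^ 2 : ℝ) : EReal) + g (x k) ≤
        ((⟪gradient f (x (k - 1)), y⟫ +
          α * γ k / 2 * ‖y - x (k - 1)‖ ^ 2 : ℝ) : EReal) + g y)
    (hstep : Tendsto (fun k => ‖x k - x (k - 1)‖) atTop (𝓝 0))
    (xstar : EuclideanSpace ℝ (Fin n)) (φ : ℕ → ℕ) (hφ : StrictMono φ)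
    (hsub : Tendsto (fun m => x (φ m)) atTop (𝓝 xstar))
    (hFconv : ∃ c : EReal,
      Tendsto (fun k => ((f (x k) : EReal) + g (x k))) atTop (𝓝 c)) :
    (0 : EuclideanSpace ℝ (Fin n)) ∈
      limitingSubdiff (fun y => ((f y : EReal) + g y)) xstar :=
  stmt17_general f g hf hg_lsc hg_ne_bot hg_proper α L₀ γ hγlb hγbd x hargmin hstep xstar φ hφ hsub
end
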